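/- arXiv:1308.5529 — 2 statements merged into one kernel-verified Lean document; each statement's English description precedes it below -/
import Mathlib

section
/- Let m₀, m₁ > 0, σ₀ = m₀/(m₀+m₁), σ₁ = m₁/(m₀+m₁), μ₁ = m₀m₁/(m₀+m₁), and m₂ > 0. For Q₁, Q₂ ∈ ℝ³ with Q₂ ≠ 0, Q₂ − σ₀Q₁ ≠ 0, Q₂ + σ₁Q₁ ≠ 0, and ‖Q₁‖/‖Q₂‖ < min(1/(2σ₀), 1/(2σ₁)), the perturbing function F_pert = −μ₁ m₂ [ (1/σ₀)(1/‖Q₂−σ₀Q₁‖ − 1/‖Q₂‖) + (1/σ₁)(1/‖Q₂+σ₁Q₁‖ − 1/‖Q₂‖) ] equals the convergent series −μ₁ m₂ ∑_{n≥2} σ_n P_n(cos ζ) ‖Q₁‖^n/‖Q₂‖^{n+1}, where σ_n = σ₀^{n−1} + (−1)^n σ₁^{n−1} and ζ is the angle between Q₁ and Q₂. -/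
noncomputable def legendreP : ℕ → ℝ → ℝ
  | 0, _ => 1
  | 1, x => x
  | (n + 2), x =>
      ((2 * (n + 1) + 1) * x * legendreP (n + 1) x - (n + 1) * legendreP n x) / (n + 2)

/-!
With `u = exp (θ i)` one has `1 - 2 r cos θ + r² = (1 - r u) (1 - r ū)`. The series
`f z = ∑ aₙ zⁿ` with `aₙ = C(2n, n) / 4ⁿ` satisfies `f z ^ 2 = 1 / (1 - z)`, because
`∑_{k+l=n} a_k a_l = 1`; hence `f (r u) f (r ū) = |f (r u)|² = 1 / √(1 - 2 r cos θ + r²)`. As a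
Cauchy product, the coefficient of `rⁿ` in `f (r u) f (r ū)` is `∑_{k+l=n} a_k a_l u^k ū^l`, which
obeys Legendre's three-term recurrence and so equals `Pₙ (cos θ)`.
Since `‖Q₂ - t Q₁‖ = ‖Q₂‖ √(1 - 2 t ρ cos ζ + t² ρ²)` with `ρ = ‖Q₁‖ / ‖Q₂‖`, this expands
`1 / ‖Q₂ - t Q₁‖`; the perturbing function combines the cases `t = σ₀` and `t = -σ₁`, whose
terms of degree `0` cancel against `1 / ‖Q₂‖` and whose terms of degree `1` cancel each other.
-/

open Finset Finset.Nat

noncomputable def invSqrtCoeff (n : ℕ) : ℝ := n.centralBinom / 4 ^ n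

noncomputable def invSqrtWeight (p : ℕ × ℕ) : ℝ := invSqrtCoeff p.1 * invSqrtCoeff p.2

lemma invSqrtCoeff_nonneg (n : ℕ) : 0 ≤ invSqrtCoeff n := by
  unfold invSqrtCoeff; positivity

lemma invSqrtCoeff_le_one (n : ℕ) : invSqrtCoeff n ≤ 1 := by
  rw [invSqrtCoeff, div_le_one (by positivity)]
  exact_mod_cast Nat.centralBinom_le_four_pow n

lemma succ_mul_invSqrtCoeff_succ (n : ℕ) :
    (n + 1 : ℝ) * invSqrtCoeff (n + 1) = (n + 1 / 2) * invSqrtCoeff n := by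
  have h : ((n + 1 : ℕ) : ℝ) * (n + 1).centralBinom = 2 * (2 * n + 1) * n.centralBinom := by
    exact_mod_cast Nat.succ_mul_centralBinom_succ n
  push_cast at h
  rw [invSqrtCoeff, invSqrtCoeff, mul_div_assoc', h, pow_succ]
  ring

section Shift

variable {M : Type*} [AddCommGroup M] [Module ℝ M]

lemma sum_antidiagonal_succ_fst_mul_invSqrtWeight_smul (n : ℕ) (g : ℕ × ℕ → M) :
    ∑ p ∈ antidiagonal (n + 1), (p.1 * invSqrtWeight p : ℝ) • g p =
      ∑ p ∈ antidiagonal n, ((p.1 + 1 / 2) * invSqrtWeight p : ℝ) • g (p.1 + 1, p.2) := by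
  rw [sum_antidiagonal_succ]
  simp only [invSqrtWeight, Nat.cast_zero, zero_mul, zero_smul, zero_add, Nat.cast_succ,
    ← mul_assoc, succ_mul_invSqrtCoeff_succ]

lemma sum_antidiagonal_succ_snd_mul_invSqrtWeight_smul (n : ℕ) (g : ℕ × ℕ → M) :
    ∑ p ∈ antidiagonal (n + 1), (p.2 * invSqrtWeight p : ℝ) • g p =
      ∑ p ∈ antidiagonal n, ((p.2 + 1 / 2) * invSqrtWeight p : ℝ) • g (p.1, p.2 + 1) := by
  rw [sum_antidiagonal_succ']
  simp only [invSqrtWeight, Nat.cast_zero, zero_mul, mul_zero, zero_smul, zero_add,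
    Nat.cast_succ, mul_left_comm _ (invSqrtCoeff _), succ_mul_invSqrtCoeff_succ]

end Shift

lemma sum_antidiagonal_invSqrtWeight (n : ℕ) : ∑ p ∈ antidiagonal n, invSqrtWeight p = 1 := by
  induction n with
  | zero => simp [invSqrtWeight, invSqrtCoeff]
  | succ n ih =>
    have key : (n + 1 : ℝ) * ∑ p ∈ antidiagonal (n + 1), invSqrtWeight p =
        (n + 1 : ℝ) * ∑ p ∈ antidiagonal n, invSqrtWeight p := calc
      _ = ∑ p ∈ antidiagonal (n + 1), (p.1 * invSqrtWeight p : ℝ) • (1 : ℝ) +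
          ∑ p ∈ antidiagonal (n + 1), (p.2 * invSqrtWeight p : ℝ) • (1 : ℝ) := by
        rw [mul_sum, ← sum_add_distrib]
        refine sum_congr rfl fun p hp => ?_
        have hp : (p.1 + p.2 : ℝ) = n + 1 := by exact_mod_cast mem_antidiagonal.mp hp
        simp only [smul_eq_mul]
        linear_combination -invSqrtWeight p * hp
      _ = ∑ p ∈ antidiagonal n, (n + 1 : ℝ) * invSqrtWeight p := by
        rw [sum_antidiagonal_succ_fst_mul_invSqrtWeight_smul,
          sum_antidiagonal_succ_snd_mul_invSqrtWeight_smul, ← sum_add_distrib]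
        refine sum_congr rfl fun p hp => ?_
        have hp : (p.1 + p.2 : ℝ) = n := by exact_mod_cast mem_antidiagonal.mp hp
        simp only [smul_eq_mul]
        linear_combination invSqrtWeight p * hp
      _ = _ := (mul_sum _ _ _).symm
    rwa [ih, mul_one, mul_eq_left₀ (by positivity)] at key

section Recurrence

variable {A : Type*} [CommRing A] [Algebra ℝ A]

noncomputable def invSqrtProdCoeff (u v : A) (n : ℕ) : A :=
  ∑ p ∈ antidiagonal n, invSqrtWeight p • (u ^ p.1 * v ^ p.2)

lemma invSqrtProdCoeff_zero (u v : A) : invSqrtProdCoeff u v 0 = 1 := by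
  simp [invSqrtProdCoeff, invSqrtWeight, invSqrtCoeff]

lemma invSqrtProdCoeff_one (u v : A) : invSqrtProdCoeff u v 1 = (1 / 2 : ℝ) • (u + v) := by
  simp only [invSqrtProdCoeff, invSqrtWeight, invSqrtCoeff, sum_antidiagonal_succ,
    antidiagonal_zero, sum_singleton, smul_add]
  norm_num [Nat.centralBinom]
  abel

lemma invSqrtProdCoeff_succ_succ (u v : A) (n : ℕ) :
    (n + 2 : ℝ) • invSqrtProdCoeff u v (n + 2) =
      (n + 3 / 2 : ℝ) • ((u + v) * invSqrtProdCoeff u v (n + 1)) -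
        (n + 1 : ℝ) • (u * v * invSqrtProdCoeff u v n) := by
  -- All three terms are re-indexed as sums over `antidiagonal (n + 1)` of multiples of
  -- `u ^ (k + 1) * v ^ l` and `u ^ k * v ^ (l + 1)`.
  have hA : (n + 2 : ℝ) • invSqrtProdCoeff u v (n + 2) = ∑ p ∈ antidiagonal (n + 1),
      (((p.1 + 1 / 2) * invSqrtWeight p : ℝ) • (u ^ (p.1 + 1) * v ^ p.2) +
        ((p.2 + 1 / 2) * invSqrtWeight p : ℝ) • (u ^ p.1 * v ^ (p.2 + 1))) := by
    rw [sum_add_distrib,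
      ← sum_antidiagonal_succ_fst_mul_invSqrtWeight_smul _ fun p => u ^ p.1 * v ^ p.2,
      ← sum_antidiagonal_succ_snd_mul_invSqrtWeight_smul _ fun p => u ^ p.1 * v ^ p.2,
      ← sum_add_distrib, invSqrtProdCoeff, smul_sum]
    refine sum_congr rfl fun p hp => ?_
    have hp : (p.1 + p.2 : ℝ) = n + 2 := by exact_mod_cast mem_antidiagonal.mp hp
    linear_combination (norm := module) hp.symm • invSqrtWeight p • (u ^ p.1 * v ^ p.2)
  have hB : (n + 1 : ℝ) • (u * v * invSqrtProdCoeff u v n) = ∑ p ∈ antidiagonal (n + 1),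
      ((p.2 * invSqrtWeight p : ℝ) • (u ^ (p.1 + 1) * v ^ p.2) +
        (p.1 * invSqrtWeight p : ℝ) • (u ^ p.1 * v ^ (p.2 + 1))) := by
    rw [sum_add_distrib, sum_antidiagonal_succ_fst_mul_invSqrtWeight_smul,
      sum_antidiagonal_succ_snd_mul_invSqrtWeight_smul, ← sum_add_distrib, invSqrtProdCoeff,
      mul_sum, smul_sum]
    refine sum_congr rfl fun p hp => ?_
    have hp : (p.1 + p.2 : ℝ) = n := by exact_mod_cast mem_antidiagonal.mp hp
    have hm : u * v * (u ^ p.1 * v ^ p.2) = u ^ (p.1 + 1) * v ^ (p.2 + 1) := by ring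
    rw [mul_smul_comm, hm]
    linear_combination (norm := module)
      hp.symm • invSqrtWeight p • (u ^ (p.1 + 1) * v ^ (p.2 + 1))
  have hC : (n + 3 / 2 : ℝ) • ((u + v) * invSqrtProdCoeff u v (n + 1)) =
      ∑ p ∈ antidiagonal (n + 1), (((n + 3 / 2) * invSqrtWeight p : ℝ) • (u ^ (p.1 + 1) * v ^ p.2) +
        ((n + 3 / 2) * invSqrtWeight p : ℝ) • (u ^ p.1 * v ^ (p.2 + 1))) := by
    rw [invSqrtProdCoeff, mul_sum, smul_sum]
    refine sum_congr rfl fun p _ => ?_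
    rw [mul_smul_comm, smul_smul, ← smul_add]
    congr 1
    ring
  rw [hA, hB, hC, ← sum_sub_distrib]
  refine sum_congr rfl fun p hp => ?_
  have hp : (p.1 + p.2 : ℝ) = n + 1 := by exact_mod_cast mem_antidiagonal.mp hp
  linear_combination (norm := module)
    hp • (invSqrtWeight p • (u ^ (p.1 + 1) * v ^ p.2) + invSqrtWeight p • (u ^ p.1 * v ^ (p.2 + 1)))

theorem invSqrtProdCoeff_eq_legendreP {u v : A} {x : ℝ} (huv : u * v = 1)
    (hsum : u + v = algebraMap ℝ A (2 * x)) :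
    ∀ n, invSqrtProdCoeff u v n = algebraMap ℝ A (legendreP n x)
  | 0 => by rw [invSqrtProdCoeff_zero, legendreP, map_one]
  | 1 => by
    rw [invSqrtProdCoeff_one, hsum, Algebra.smul_def, ← map_mul, legendreP]
    congr 1
    ring
  | n + 2 => by
    have h := invSqrtProdCoeff_succ_succ u v n
    rw [invSqrtProdCoeff_eq_legendreP huv hsum (n + 1), invSqrtProdCoeff_eq_legendreP huv hsum n,
      hsum, huv, one_mul] at h
    refine smul_right_injective A (r := (n + 2 : ℝ)) (by positivity) ?_
    simp only [h, legendreP, Algebra.smul_def, ← map_mul, ← map_sub]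
    congr 1
    field_simp
    ring

end Recurrence

section Series

variable {𝕜 : Type*} [NormedField 𝕜] [NormedAlgebra ℝ 𝕜]

lemma invSqrtProdCoeff_self (z : 𝕜) (n : ℕ) : invSqrtProdCoeff z z n = z ^ n := by
  rw [invSqrtProdCoeff, sum_congr rfl fun p hp => by rw [← pow_add, mem_antidiagonal.mp hp],
    ← sum_smul, sum_antidiagonal_invSqrtWeight, one_smul]

lemma invSqrtProdCoeff_smul (r : ℝ) (u v : 𝕜) (n : ℕ) :
    invSqrtProdCoeff (r • u) (r • v) n = r ^ n • invSqrtProdCoeff u v n := by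
  rw [invSqrtProdCoeff, invSqrtProdCoeff, smul_sum]
  refine sum_congr rfl fun p hp => ?_
  rw [smul_pow, smul_pow, smul_mul_smul_comm, ← pow_add, mem_antidiagonal.mp hp, smul_comm]

lemma summable_norm_invSqrtCoeff_smul_pow {z : 𝕜} (hz : ‖z‖ < 1) :
    Summable fun n => ‖invSqrtCoeff n • z ^ n‖ := by
  refine (summable_geometric_of_lt_one (norm_nonneg z) hz).of_nonneg_of_le
    (fun _ => norm_nonneg _) fun n => ?_
  rw [norm_smul, norm_pow, Real.norm_of_nonneg (invSqrtCoeff_nonneg n)]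
  exact mul_le_of_le_one_left (by positivity) (invSqrtCoeff_le_one n)

variable [CompleteSpace 𝕜]

noncomputable def invSqrtSeries (z : 𝕜) : 𝕜 := ∑' n, invSqrtCoeff n • z ^ n

lemma hasSum_invSqrtProdCoeff {z w : 𝕜} (hz : ‖z‖ < 1) (hw : ‖w‖ < 1) :
    HasSum (invSqrtProdCoeff z w) (invSqrtSeries z * invSqrtSeries w) := by
  have hzs := summable_norm_invSqrtCoeff_smul_pow hz
  have hws := summable_norm_invSqrtCoeff_smul_pow hw
  have hterm : ∀ n, invSqrtProdCoeff z w n =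
      ∑ p ∈ antidiagonal n, invSqrtCoeff p.1 • z ^ p.1 * invSqrtCoeff p.2 • w ^ p.2 :=
    fun n => sum_congr rfl fun _ _ => (smul_mul_smul_comm _ _ _ _).symm
  rw [funext hterm, invSqrtSeries, invSqrtSeries,
    tsum_mul_tsum_eq_tsum_sum_antidiagonal_of_summable_norm hzs hws]
  exact (summable_norm_sum_mul_antidiagonal_of_summable_norm hzs hws).of_norm.hasSum

lemma invSqrtSeries_mul_self {z : 𝕜} (hz : ‖z‖ < 1) :
    invSqrtSeries z * invSqrtSeries z = (1 - z)⁻¹ :=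
  (hasSum_invSqrtProdCoeff hz hz).unique <| by
    simpa only [funext (invSqrtProdCoeff_self z)] using hasSum_geometric_of_norm_lt_one hz

end Series

open Complex ComplexConjugate in
theorem hasSum_legendreP_cos_mul_pow (θ r : ℝ) (hr : |r| < 1) :
    HasSum (fun n => legendreP n (Real.cos θ) * r ^ n)
      (1 / √(1 - 2 * Real.cos θ * r + r ^ 2)) := by
  set u : ℂ := exp (θ * I)
  have hu : ‖u‖ = 1 := norm_exp_ofReal_mul_I θ
  have hconj : conj u = exp (-θ * I) := by rw [← exp_conj]; simp
  have huv : u * conj u = 1 := by rw [hconj, ← exp_add]; simp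
  have hsum : u + conj u = algebraMap ℝ ℂ (2 * Real.cos θ) := by
    rw [hconj, coe_algebraMap, ofReal_mul, ofReal_cos, ofReal_ofNat, two_cos]
  have hz : ‖r • u‖ < 1 := by rwa [norm_smul, hu, mul_one]
  have hw : ‖r • conj u‖ < 1 := by rwa [norm_smul, norm_conj, hu, mul_one]
  set F := invSqrtSeries (r • u)
  have hF : invSqrtSeries (r • conj u) = conj F := by
    simp only [F, invSqrtSeries, conj_tsum, real_smul, map_mul, map_pow, conj_ofReal]
  have hcoeff : invSqrtProdCoeff (r • u) (r • conj u) =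
      fun n => ((legendreP n (Real.cos θ) * r ^ n : ℝ) : ℂ) := funext fun n => by
    rw [invSqrtProdCoeff_smul, invSqrtProdCoeff_eq_legendreP huv hsum, coe_algebraMap, real_smul]
    push_cast; ring
  have hfactor : (1 - r • u) * (1 - r • conj u) = ((1 - 2 * Real.cos θ * r + r ^ 2 : ℝ) : ℂ) := by
    rw [coe_algebraMap] at hsum
    simp only [real_smul]
    push_cast at hsum ⊢
    linear_combination (r : ℂ) ^ 2 * huv - r * hsum
  have hsq : (normSq F) ^ 2 = (1 - 2 * Real.cos θ * r + r ^ 2)⁻¹ := by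
    have : ((normSq F : ℝ) : ℂ) ^ 2 = (F * F) * (conj F * conj F) := by rw [← mul_conj]; ring
    rw [← hF, invSqrtSeries_mul_self hz, invSqrtSeries_mul_self hw, ← mul_inv, hfactor] at this
    exact_mod_cast this
  have hval : F * conj F = ((1 / √(1 - 2 * Real.cos θ * r + r ^ 2) : ℝ) : ℂ) := by
    rw [mul_conj, one_div, ← Real.sqrt_inv, ← hsq, Real.sqrt_sq (normSq_nonneg F)]
  have h := hasSum_invSqrtProdCoeff hz hw
  rw [hcoeff, hF, hval] at h
  exact_mod_cast h

section Geometry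

variable {E : Type*} [NormedAddCommGroup E] [InnerProductSpace ℝ E]

lemma norm_sub_smul_eq_mul_sqrt {Q₁ Q₂ : E} (hQ₂ : Q₂ ≠ 0) {x : ℝ}
    (hx : x = inner ℝ Q₁ Q₂ / (‖Q₁‖ * ‖Q₂‖)) (t : ℝ) :
    ‖Q₂ - t • Q₁‖ =
      ‖Q₂‖ * √(1 - 2 * x * (t * ‖Q₁‖ / ‖Q₂‖) + (t * ‖Q₁‖ / ‖Q₂‖) ^ 2) := by
  have hQ₂norm : ‖Q₂‖ ≠ 0 := norm_ne_zero_iff.mpr hQ₂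
  have hinner : inner ℝ Q₁ Q₂ = x * ‖Q₁‖ * ‖Q₂‖ := by
    rcases eq_or_ne Q₁ 0 with rfl | hQ₁
    · simp
    · rw [hx]; field_simp [norm_ne_zero_iff.mpr hQ₁]
  have hsq : ‖Q₂ - t • Q₁‖ ^ 2 =
      ‖Q₂‖ ^ 2 * (1 - 2 * x * (t * ‖Q₁‖ / ‖Q₂‖) + (t * ‖Q₁‖ / ‖Q₂‖) ^ 2) := by
    rw [norm_sub_sq_real, real_inner_smul_right, real_inner_comm, hinner, norm_smul,
      Real.norm_eq_abs, mul_pow, sq_abs]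
    field_simp
  rw [← Real.sqrt_sq (norm_nonneg (Q₂ - t • Q₁)), hsq, Real.sqrt_mul (sq_nonneg _),
    Real.sqrt_sq (norm_nonneg _)]

theorem hasSum_legendreP_div_norm_sub_smul {Q₁ Q₂ : E} (hQ₂ : Q₂ ≠ 0) {ζ : ℝ}
    (hζ : Real.cos ζ = inner ℝ Q₁ Q₂ / (‖Q₁‖ * ‖Q₂‖)) {t : ℝ} (ht : |t| * (‖Q₁‖ / ‖Q₂‖) < 1) :
    HasSum (fun n => legendreP n (Real.cos ζ) * (t * ‖Q₁‖ / ‖Q₂‖) ^ n / ‖Q₂‖)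
      (1 / ‖Q₂ - t • Q₁‖) := by
  have hr : |t * ‖Q₁‖ / ‖Q₂‖| < 1 := by
    rwa [mul_div_assoc, abs_mul, abs_div, abs_norm, abs_norm]
  rw [norm_sub_smul_eq_mul_sqrt hQ₂ hζ, div_mul_eq_div_div_swap]
  exact (hasSum_legendreP_cos_mul_pow ζ _ hr).div_const _

end Geometry

lemma pos_and_abs_mul_lt_one_of_lt_one_div_two_mul {ρ σ : ℝ} (hρ : 0 ≤ ρ)
    (h : ρ < 1 / (2 * σ)) : 0 < σ ∧ |σ| * ρ < 1 := by
  have hσ : 0 < σ := by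
    have := hρ.trans_lt h
    rw [one_div_pos] at this
    linarith
  rw [lt_div_iff₀ (by positivity)] at h
  rw [abs_of_pos hσ]
  exact ⟨hσ, by linarith⟩

theorem perturbing_function_legendre_expansion_general
    (m₂ : ℝ)
    (σ₀ σ₁ μ₁ : ℝ)
    (Q₁ Q₂ : EuclideanSpace ℝ (Fin 3))
    (hQ₂ : Q₂ ≠ 0)
    (hratio : ‖Q₁‖ / ‖Q₂‖ < min (1 / (2 * σ₀)) (1 / (2 * σ₁)))
    (ζ : ℝ) (hζ : Real.cos ζ = (inner ℝ Q₁ Q₂ : ℝ) / (‖Q₁‖ * ‖Q₂‖)) :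
    HasSum (fun n : ℕ =>
      -(μ₁ * m₂) * ((σ₀ ^ (n + 2 - 1) + (-1 : ℝ) ^ (n + 2) * σ₁ ^ (n + 2 - 1)) *
        legendreP (n + 2) (Real.cos ζ) * ‖Q₁‖ ^ (n + 2) / ‖Q₂‖ ^ (n + 2 + 1)))
      (-(μ₁ * m₂) *
        ((1 / σ₀) * (1 / ‖Q₂ - σ₀ • Q₁‖ - 1 / ‖Q₂‖) +
         (1 / σ₁) * (1 / ‖Q₂ + σ₁ • Q₁‖ - 1 / ‖Q₂‖))) := by
  have hρ : 0 ≤ ‖Q₁‖ / ‖Q₂‖ := by positivity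
  obtain ⟨hσ₀, hr₀⟩ :=
    pos_and_abs_mul_lt_one_of_lt_one_div_two_mul hρ (hratio.trans_le (min_le_left _ _))
  obtain ⟨hσ₁, hr₁⟩ :=
    pos_and_abs_mul_lt_one_of_lt_one_div_two_mul hρ (hratio.trans_le (min_le_right _ _))
  have hexp₀ := hasSum_legendreP_div_norm_sub_smul hQ₂ hζ hr₀
  have hexp₁ := hasSum_legendreP_div_norm_sub_smul hQ₂ hζ (t := -σ₁) (by rwa [abs_neg])
  rw [neg_smul, sub_neg_eq_add] at hexp₁
  have h := ((hasSum_nat_add_iff' 2).mpr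
    ((hexp₀.mul_left σ₀⁻¹).add (hexp₁.mul_left σ₁⁻¹))).mul_left (-(μ₁ * m₂))
  have hQ₂norm : ‖Q₂‖ ≠ 0 := norm_ne_zero_iff.mpr hQ₂
  refine (congrArg₂ HasSum (funext fun n => ?_) ?_).mpr h
  · rw [show n + 2 - 1 = n + 1 from rfl, neg_mul σ₁, neg_div, neg_pow (σ₁ * _ / _)]
    generalize legendreP (n + 2) (Real.cos ζ) = P
    simp only [div_pow, mul_pow]
    field_simp
    ring
  · simp only [sum_range_succ, sum_range_zero, legendreP]
    field_simp
    ring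

theorem perturbing_function_legendre_expansion
    (m₀ m₁ m₂ : ℝ) (hm₀ : 0 < m₀) (hm₁ : 0 < m₁) (hm₂ : 0 < m₂)
    (σ₀ σ₁ μ₁ : ℝ)
    (hσ₀ : σ₀ = m₀ / (m₀ + m₁)) (hσ₁ : σ₁ = m₁ / (m₀ + m₁))
    (hμ₁ : μ₁ = m₀ * m₁ / (m₀ + m₁))
    (Q₁ Q₂ : EuclideanSpace ℝ (Fin 3))
    (hQ₂ : Q₂ ≠ 0) (h₀ : Q₂ - σ₀ • Q₁ ≠ 0) (h₁ : Q₂ + σ₁ • Q₁ ≠ 0)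
    (hratio : ‖Q₁‖ / ‖Q₂‖ < min (1 / (2 * σ₀)) (1 / (2 * σ₁)))
    (ζ : ℝ) (hζ : Real.cos ζ = (inner ℝ Q₁ Q₂ : ℝ) / (‖Q₁‖ * ‖Q₂‖)) :
    HasSum (fun n : ℕ =>
      -(μ₁ * m₂) * ((σ₀ ^ (n + 2 - 1) + (-1 : ℝ) ^ (n + 2) * σ₁ ^ (n + 2 - 1)) *
        legendreP (n + 2) (Real.cos ζ) * ‖Q₁‖ ^ (n + 2) / ‖Q₂‖ ^ (n + 2 + 1)))
      (-(μ₁ * m₂) *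
        ((1 / σ₀) * (1 / ‖Q₂ - σ₀ • Q₁‖ - 1 / ‖Q₂‖) +
         (1 / σ₁) * (1 / ‖Q₂ + σ₁ • Q₁‖ - 1 / ‖Q₂‖))) :=
  perturbing_function_legendre_expansion_general m₂ σ₀ σ₁ μ₁ Q₁ Q₂ hQ₂ hratio ζ hζ
end

section
/- Let α, β > 0 with α ≠ β and |α−β| < 1. The function β ↦ −2√(α+β)·√(9α²β − 6αβ² + β³ − 4α³ + 5α)/β⁴ is not constant in β on any open interval where the expression under the square roots is positive; i.e., its derivative with respect to β is not identically zero. -/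
theorem torsion_nontrivial_dependence
    (α : ℝ) (hα : 0 < α)
    (f : ℝ → ℝ)
    (hf : ∀ β, f β = -2 * Real.sqrt (α + β) *
      Real.sqrt (9 * α ^ 2 * β - 6 * α * β ^ 2 + β ^ 3 - 4 * α ^ 3 + 5 * α) / β ^ 4)
    (l u : ℝ) (hlu : l < u)
    (hpos : ∀ β ∈ Set.Ioo l u, 0 < β ∧ β ≠ α ∧ |α - β| < 1 ∧ 0 < α + β ∧
      0 < 9 * α ^ 2 * β - 6 * α * β ^ 2 + β ^ 3 - 4 * α ^ 3 + 5 * α) :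
    ∃ β₁ ∈ Set.Ioo l u, ∃ β₂ ∈ Set.Ioo l u, f β₁ ≠ f β₂ := by
  by_contra h
  push_neg at h
  have hmI : (l + u) / 2 ∈ Set.Ioo l u := ⟨by linarith, by linarith⟩
  set m := (l + u) / 2 with hm
  obtain ⟨hm0, hmα, hmd, hA, hP⟩ := hpos m hmI
  set c := f m with hc
  have hclt : c < 0 := by
    rw [hc, hf]
    apply div_neg_of_neg_of_pos
    · have h1 := Real.sqrt_pos.mpr hA
      have h2 := Real.sqrt_pos.mpr hP
      nlinarith
    · positivity
  have key : ∀ β ∈ Set.Ioo l u,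
      4 * ((α + β) * (9 * α ^ 2 * β - 6 * α * β ^ 2 + β ^ 3 - 4 * α ^ 3 + 5 * α))
        = c ^ 2 * β ^ 8 := by
    intro β hβ
    obtain ⟨hb0, _, _, hA', hP'⟩ := hpos β hβ
    have hfβ : f β = c := h β hβ m hmI
    have hsq : (f β) ^ 2 = c ^ 2 := by rw [hfβ]
    rw [hf] at hsq
    have e1 : (-2 * Real.sqrt (α + β) *
        Real.sqrt (9 * α ^ 2 * β - 6 * α * β ^ 2 + β ^ 3 - 4 * α ^ 3 + 5 * α) / β ^ 4) ^ 2
        = 4 * ((α + β) * (9 * α ^ 2 * β - 6 * α * β ^ 2 + β ^ 3 - 4 * α ^ 3 + 5 * α)) / β ^ 8 := by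
      rw [div_pow]
      rw [show (-2 * Real.sqrt (α + β) *
        Real.sqrt (9 * α ^ 2 * β - 6 * α * β ^ 2 + β ^ 3 - 4 * α ^ 3 + 5 * α)) ^ 2
        = 4 * (Real.sqrt (α + β) ^ 2 *
          Real.sqrt (9 * α ^ 2 * β - 6 * α * β ^ 2 + β ^ 3 - 4 * α ^ 3 + 5 * α) ^ 2) by ring]
      rw [Real.sq_sqrt hA'.le, Real.sq_sqrt hP'.le]

      ring
    rw [e1] at hsq
    have hb8 : (0:ℝ) < β ^ 8 := by positivity
    field_simp at hsq
    linarith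
  set Q : Polynomial ℝ :=
    Polynomial.C 4 * ((Polynomial.C α + Polynomial.X) *
      (Polynomial.C (9 * α ^ 2) * Polynomial.X - Polynomial.C (6 * α) * Polynomial.X ^ 2
        + Polynomial.X ^ 3 + Polynomial.C (-(4 * α ^ 3) + 5 * α)))
      - Polynomial.C (c ^ 2) * Polynomial.X ^ 8 with hQ
  have hQ0 : Q = 0 := by
    apply Polynomial.eq_zero_of_infinite_isRoot
    apply Set.Infinite.mono _ (Set.Ioo_infinite hlu)
    intro x hx
    have := key x hx
    simp only [hQ, Polynomial.IsRoot, Polynomial.eval_sub, Polynomial.eval_mul,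
      Polynomial.eval_add, Polynomial.eval_pow, Polynomial.eval_C, Polynomial.eval_X,
      Set.mem_setOf_eq]
    linarith [this]
  have := congrArg (Polynomial.eval (-α)) hQ0
  simp only [hQ, Polynomial.eval_sub, Polynomial.eval_mul, Polynomial.eval_add,
    Polynomial.eval_pow, Polynomial.eval_C, Polynomial.eval_X, Polynomial.eval_zero] at this
  have hα8 : (0:ℝ) < α ^ 8 := by positivity
  have hc2 : 0 < c ^ 2 := by nlinarith
  nlinarith [mul_pos hc2 hα8]
end
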